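/- Suppose additionally that N < kmax and that u satisfies (U1) and (U2). If a strategy profile s = (s_1, s_2) satisfies s_i(t_i) = c for some i ∈ {1,2} and some arrival pair (t_1, t_2) ∈ T with t_i ≥ N (i.e., some player goes to the canteen at 9:00 or after at a realizable arrival time), then s is not Pareto optimal over T. -/

import Mathlib

/-- The two actions: `c` (canteen) and `o` (office). -/
inductive Act : Type
  | c : Act
  | o : Act
deriving DecidableEq

open Act

/-- The set of arrival pairs
`T = {(k, k+1) : kmin ≤ k ≤ kmax - 1} ∪ {(k, k-1) : kmin + 1 ≤ k ≤ kmax}`. -/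
noncomputable def T (kmin kmax : ℤ) : Finset (ℤ × ℤ) :=
  ((Finset.Icc kmin (kmax - 1)).image (fun k => (k, k + 1))) ∪
  ((Finset.Icc (kmin + 1) kmax).image (fun k => (k, k - 1)))

/-- Subgame `T1 = {(t1,t2) ∈ T : t1 ≡ kmin (mod 2)}`. -/
noncomputable def T1 (kmin kmax : ℤ) : Finset (ℤ × ℤ) :=
  (T kmin kmax).filter (fun t => t.1 % 2 = kmin % 2)

/-- Subgame `T2 = {(t1,t2) ∈ T : t2 ≡ kmin (mod 2)}`. -/
noncomputable def T2 (kmin kmax : ℤ) : Finset (ℤ × ℤ) :=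
  (T kmin kmax).filter (fun t => t.2 % 2 = kmin % 2)

/-- The expected utility of profile `s` over a set `S` of arrival pairs:
`EU_S(s) = (1/|S|) · Σ_{(t1,t2) ∈ S} u_{(t1,t2)}(s_1(t1), s_2(t2))`. -/
noncomputable def EU (u : ℤ × ℤ → Act → Act → ℝ) (s : (ℤ → Act) × (ℤ → Act))
    (S : Finset (ℤ × ℤ)) : ℝ :=
  (∑ t ∈ S, u t (s.1 t.1) (s.2 t.2)) / S.card

/-- `s` is Pareto optimal over `S` if no profile `s'` has `EU_S(s') > EU_S(s)`. -/
def ParetoOptimal (u : ℤ × ℤ → Act → Act → ℝ) (S : Finset (ℤ × ℤ))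
    (s : (ℤ → Act) × (ℤ → Act)) : Prop :=
  ¬ ∃ s' : (ℤ → Act) × (ℤ → Act), EU u s' S > EU u s S

/-- `u` satisfies conditions (U1) and (U2) on the arrival pairs of `T`. -/
def SatisfiesU1U2 (kmin kmax N : ℤ) (u : ℤ × ℤ → Act → Act → ℝ) : Prop :=
  ∀ t ∈ T kmin kmax,
    (t.1 < N ∧ t.2 < N →
      u t c c > u t o o ∧ u t o o > u t c o ∧ u t c o = u t o c) ∧
    (N ≤ t.1 ∨ N ≤ t.2 →
      u t o o > u t c o ∧ u t c o = u t o c ∧ u t o c = u t c c)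

/-- `u` is uniform with values `A > B > C` (the order is assumed separately). -/
def Uniform (kmin kmax N : ℤ) (u : ℤ × ℤ → Act → Act → ℝ) (A B C : ℝ) : Prop :=
  ∀ t ∈ T kmin kmax,
    (t.1 < N ∧ t.2 < N →
      u t c c = A ∧ u t o o = B ∧ u t c o = C ∧ u t o c = C) ∧
    (N ≤ t.1 ∨ N ≤ t.2 →
      u t o o = B ∧ u t c c = C ∧ u t c o = C ∧ u t o c = C)

/-- The cut-off strategy with cut-off `m`: canteen iff arriving strictly before `m`. -/
def cutoff (m : ℤ) : ℤ → Act := fun k => if k < m then c else o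

/-- The all-office strategy. -/
def allOffice : ℤ → Act := fun _ => o

/-! Replacing every action taken at 9:00 or later by `o` never lowers a payoff: when some player
arrives late, (U2) makes `(o, o)` the best outcome and all other outcomes equally bad. It strictly
raises the payoff at a pair where both players arrive late and one of them went to the canteen,
and such a pair exists because a late arrival time `a` always has a late partner `a + 1` or, when
`a = kmax`, `a - 1 ≥ N`. -/

lemma mem_T_up {kmin kmax a : ℤ} (h1 : kmin ≤ a) (h2 : a ≤ kmax - 1) :
    (a, a + 1) ∈ T kmin kmax :=
  Finset.mem_union_left _ (Finset.mem_image.2 ⟨a, Finset.mem_Icc.2 ⟨h1, h2⟩, rfl⟩)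

lemma mem_T_down {kmin kmax a : ℤ} (h1 : kmin + 1 ≤ a) (h2 : a ≤ kmax) :
    (a, a - 1) ∈ T kmin kmax :=
  Finset.mem_union_right _ (Finset.mem_image.2 ⟨a, Finset.mem_Icc.2 ⟨h1, h2⟩, rfl⟩)

lemma swap_mem_T {kmin kmax : ℤ} {t : ℤ × ℤ} (ht : t ∈ T kmin kmax) :
    t.swap ∈ T kmin kmax := by
  rcases Finset.mem_union.1 ht with h | h <;> obtain ⟨k, hk, rfl⟩ := Finset.mem_image.1 h <;>
    rw [Finset.mem_Icc] at hk
  · simpa using mem_T_down (a := k + 1) (by omega) (by omega)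
  · simpa using mem_T_up (a := k - 1) (by omega) (by omega)

lemma fst_le_of_mem_T {kmin kmax : ℤ} {t : ℤ × ℤ} (ht : t ∈ T kmin kmax) : t.1 ≤ kmax := by
  rcases Finset.mem_union.1 ht with h | h <;> obtain ⟨k, hk, rfl⟩ := Finset.mem_image.1 h <;>
    rw [Finset.mem_Icc] at hk <;> dsimp only <;> omega

lemma snd_le_of_mem_T {kmin kmax : ℤ} {t : ℤ × ℤ} (ht : t ∈ T kmin kmax) : t.2 ≤ kmax :=
  fst_le_of_mem_T (swap_mem_T ht)

lemma exists_late_partner {kmin kmax N a : ℤ} (hmin : kmin < N) (hmax : N < kmax) (ha : N ≤ a)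
    (ha' : a ≤ kmax) : ∃ b, N ≤ b ∧ (a, b) ∈ T kmin kmax := by
  rcases lt_or_eq_of_le ha' with ha' | rfl
  · exact ⟨a + 1, by omega, mem_T_up (by omega) (by omega)⟩
  · exact ⟨a - 1, by omega, mem_T_down (by omega) le_rfl⟩

lemma exists_late_pair {kmin kmax N : ℤ} (h1 : kmin < N) (h3 : N < kmax)
    {s : (ℤ → Act) × (ℤ → Act)}
    (h : ∃ t ∈ T kmin kmax, (N ≤ t.1 ∧ s.1 t.1 = c) ∨ (N ≤ t.2 ∧ s.2 t.2 = c)) :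
    ∃ t ∈ T kmin kmax, N ≤ t.1 ∧ N ≤ t.2 ∧ (s.1 t.1 = c ∨ s.2 t.2 = c) := by
  obtain ⟨t, ht, ⟨hN, hc⟩ | ⟨hN, hc⟩⟩ := h
  · obtain ⟨b, hb, hmem⟩ := exists_late_partner h1 h3 hN (fst_le_of_mem_T ht)
    exact ⟨(t.1, b), hmem, hN, hb, Or.inl hc⟩
  · obtain ⟨b, hb, hmem⟩ := exists_late_partner h1 h3 hN (snd_le_of_mem_T ht)
    exact ⟨(b, t.2), swap_mem_T hmem, hb, hN, Or.inr hc⟩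

/-- Condition (U2) at a single arrival pair. -/
def LateUtility (v : Act → Act → ℝ) : Prop :=
  v o o > v c o ∧ v c o = v o c ∧ v o c = v c c

namespace LateUtility

variable {v : Act → Act → ℝ}

lemma le_o_left (hv : LateUtility v) (a b : Act) : v a b ≤ v o b := by
  obtain ⟨h₁, h₂, h₃⟩ := hv
  cases a <;> cases b <;> linarith

lemma le_o_right (hv : LateUtility v) (a b : Act) : v a b ≤ v a o := by
  obtain ⟨h₁, h₂, h₃⟩ := hv
  cases a <;> cases b <;> linarith

lemma lt_o_o (hv : LateUtility v) {a b : Act} (h : a = c ∨ b = c) : v a b < v o o := by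
  obtain ⟨h₁, h₂, h₃⟩ := hv
  rcases h with rfl | rfl <;> [cases b; cases a] <;> linarith

end LateUtility

def officeFrom (N : ℤ) (a : ℤ → Act) : ℤ → Act := fun k => if N ≤ k then o else a k

lemma officeFrom_of_le {N k : ℤ} (a : ℤ → Act) (h : N ≤ k) : officeFrom N a k = o := if_pos h

lemma officeFrom_of_lt {N k : ℤ} (a : ℤ → Act) (h : k < N) : officeFrom N a k = a k :=
  if_neg (not_le.2 h)

lemma u_le_u_officeFrom {kmin kmax N : ℤ} {u : ℤ × ℤ → Act → Act → ℝ}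
    (hu : SatisfiesU1U2 kmin kmax N u) (s : (ℤ → Act) × (ℤ → Act)) {t : ℤ × ℤ}
    (ht : t ∈ T kmin kmax) :
    u t (s.1 t.1) (s.2 t.2) ≤ u t (officeFrom N s.1 t.1) (officeFrom N s.2 t.2) := by
  by_cases hlate : N ≤ t.1 ∨ N ≤ t.2
  · have hv : LateUtility (u t) := (hu t ht).2 hlate
    have hfst : u t (s.1 t.1) (s.2 t.2) ≤ u t (officeFrom N s.1 t.1) (s.2 t.2) := by
      rcases le_or_gt N t.1 with h | h
      · rw [officeFrom_of_le _ h]; exact hv.le_o_left _ _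
      · rw [officeFrom_of_lt _ h]
    rcases le_or_gt N t.2 with h | h
    · rw [officeFrom_of_le _ h]; exact hfst.trans (hv.le_o_right _ _)
    · rwa [officeFrom_of_lt _ h]
  · push Not at hlate
    rw [officeFrom_of_lt _ hlate.1, officeFrom_of_lt _ hlate.2]

lemma EU_lt_EU_of_le_of_exists_lt {u : ℤ × ℤ → Act → Act → ℝ} {S : Finset (ℤ × ℤ)}
    {s s' : (ℤ → Act) × (ℤ → Act)}
    (hle : ∀ t ∈ S, u t (s.1 t.1) (s.2 t.2) ≤ u t (s'.1 t.1) (s'.2 t.2))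
    (hlt : ∃ t ∈ S, u t (s.1 t.1) (s.2 t.2) < u t (s'.1 t.1) (s'.2 t.2)) :
    EU u s S < EU u s' S := by
  have hS : S.Nonempty := let ⟨t, ht, _⟩ := hlt; ⟨t, ht⟩
  have hcard : (0 : ℝ) < S.card := by exact_mod_cast Finset.card_pos.2 hS
  exact div_lt_div_of_pos_right (Finset.sum_lt_sum hle hlt) hcard

theorem stmt_0_general (kmin kmax N : ℤ) (h1 : kmin < N) (h3 : N < kmax)
    (u : ℤ × ℤ → Act → Act → ℝ) (hu : SatisfiesU1U2 kmin kmax N u)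
    (s : (ℤ → Act) × (ℤ → Act))
    (h : ∃ t ∈ T kmin kmax,
      (N ≤ t.1 ∧ s.1 t.1 = Act.c) ∨ (N ≤ t.2 ∧ s.2 t.2 = Act.c)) :
    ¬ ParetoOptimal u (T kmin kmax) s := by
  obtain ⟨t, ht, hN1, hN2, hc⟩ := exists_late_pair h1 h3 h
  refine fun hpo => hpo ⟨(officeFrom N s.1, officeFrom N s.2), ?_⟩
  refine EU_lt_EU_of_le_of_exists_lt (fun t' ht' => u_le_u_officeFrom hu s ht') ⟨t, ht, ?_⟩
  dsimp only
  rw [officeFrom_of_le _ hN1, officeFrom_of_le _ hN2]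
  exact LateUtility.lt_o_o ((hu t ht).2 (Or.inl hN1)) hc

/-- Going to the canteen at 9:00 or after (at a realizable arrival pair)
is never Pareto optimal over `T`. -/
theorem stmt_0 (kmin kmax N : ℤ) (h1 : kmin < N) (h2 : N ≤ kmax) (h3 : N < kmax)
    (u : ℤ × ℤ → Act → Act → ℝ) (hu : SatisfiesU1U2 kmin kmax N u)
    (s : (ℤ → Act) × (ℤ → Act))
    (h : ∃ t ∈ T kmin kmax,
      (N ≤ t.1 ∧ s.1 t.1 = Act.c) ∨ (N ≤ t.2 ∧ s.2 t.2 = Act.c)) :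
    ¬ ParetoOptimal u (T kmin kmax) s :=
  stmt_0_general kmin kmax N h1 h3 u hu s h
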